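/- Let H be a complex Hilbert space, let T be a bounded linear operator on H, and let A and B be bounded self-adjoint operators on H that are positive and invertible (i.e., there is c > 0 with A ≥ c·1 and B ≥ c·1). Suppose M₀, M₁ ≥ 0 satisfy ‖T‖ ≤ M₀ and ‖A T B‖ ≤ M₁. Then for every θ ∈ [0, 1], ‖A^θ T B^θ‖ ≤ M₀^{1-θ} M₁^θ, where A^θ and B^θ are the real powers defined by the continuous functional calculus. -/

import Mathlib

/-!
Write `A = exp (log A)` and `B = exp (log B)` with self-adjoint logarithms and interpolate along
the entire function `F z = exp (z • log A) * T * exp (z • log B)`. On `re z = 0` the exponentials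
are unitary, so `‖F z‖ ≤ ‖T‖`; on `re z = 1` they are `A` and `B` up to unitary factors, so
`‖F z‖ ≤ ‖A * T * B‖`. Hadamard's three-lines theorem bounds `‖F θ‖ = ‖A ^ θ * T * B ^ θ‖`.
-/

open scoped InnerProductSpace
open NormedSpace Complex

section CStarAlgebra

variable {𝔸 : Type*} [CStarAlgebra 𝔸]

theorem exp_add_smul (L : 𝔸) (z w : ℂ) : exp ((z + w) • L) = exp (z • L) * exp (w • L) := by
  let : NormedAlgebra ℚ 𝔸 := .restrictScalars ℚ ℂ 𝔸
  rw [add_smul, exp_add_of_commute (((Commute.refl L).smul_left z).smul_right w)]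

-- Inside `IsSelfAdjoint.*` the bare name `exp` would resolve to `IsSelfAdjoint.exp`.
theorem IsSelfAdjoint.norm_exp_smul_le_norm_exp_re_smul [Nontrivial 𝔸] {L : 𝔸}
    (hL : IsSelfAdjoint L) (z : ℂ) :
    ‖NormedSpace.exp (z • L)‖ ≤ ‖NormedSpace.exp (z.re • L)‖ := by
  let : NormedAlgebra ℚ 𝔸 := .restrictScalars ℚ ℂ 𝔸
  have hunitary : NormedSpace.exp ((z.im * I) • L) ∈ unitary 𝔸 :=
    exp_mem_unitary_of_mem_skewAdjoint (hL.smul_mem_skewAdjoint (by simp [skewAdjoint.mem_iff]))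
  calc ‖NormedSpace.exp (z • L)‖
      = ‖NormedSpace.exp ((z.re : ℂ) • L) * NormedSpace.exp ((z.im * I) • L)‖ := by
        rw [← exp_add_smul, re_add_im]
    _ ≤ ‖NormedSpace.exp ((z.re : ℂ) • L)‖ * ‖NormedSpace.exp ((z.im * I) • L)‖ :=
        norm_mul_le _ _
    _ = ‖NormedSpace.exp (z.re • L)‖ := by
        rw [CStarRing.norm_of_mem_unitary hunitary, mul_one, Complex.coe_smul]

theorem IsSelfAdjoint.norm_exp_smul_le_one_of_re_eq_zero [Nontrivial 𝔸] {L : 𝔸}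
    (hL : IsSelfAdjoint L) {z : ℂ} (hz : z.re = 0) : ‖NormedSpace.exp (z • L)‖ ≤ 1 := by
  simpa [hz] using hL.norm_exp_smul_le_norm_exp_re_smul z

theorem IsSelfAdjoint.exists_norm_exp_smul_le [Nontrivial 𝔸] {L : 𝔸} (hL : IsSelfAdjoint L) :
    ∃ C, ∀ z ∈ HadamardThreeLines.verticalClosedStrip 0 1, ‖NormedSpace.exp (z • L)‖ ≤ C := by
  let : NormedAlgebra ℚ 𝔸 := .restrictScalars ℚ ℂ 𝔸
  obtain ⟨C, hC⟩ := isCompact_Icc.exists_bound_of_continuousOn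
    (f := fun t : ℝ => NormedSpace.exp (t • L)) (by fun_prop)
  exact ⟨C, fun z hz => (hL.norm_exp_smul_le_norm_exp_re_smul z).trans (hC _ hz)⟩

open HadamardThreeLines in
theorem IsSelfAdjoint.norm_exp_smul_mul_mul_exp_smul_le {LA LB : 𝔸} (hLA : IsSelfAdjoint LA)
    (hLB : IsSelfAdjoint LB) (T : 𝔸) {θ : ℝ} (hθ0 : 0 ≤ θ) (hθ1 : θ ≤ 1) :
    ‖NormedSpace.exp (θ • LA) * T * NormedSpace.exp (θ • LB)‖
      ≤ ‖T‖ ^ (1 - θ) * ‖NormedSpace.exp LA * T * NormedSpace.exp LB‖ ^ θ := by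
  obtain _ | _ := subsingleton_or_nontrivial 𝔸
  · rw [Subsingleton.elim (_ * _) 0, norm_zero]
    positivity
  set F : ℂ → 𝔸 := fun z => NormedSpace.exp (z • LA) * T * NormedSpace.exp (z • LB)
  have hF_diff : Differentiable ℂ F := fun z =>
    ((hasDerivAt_exp_smul_const LA z).differentiableAt.mul_const T).mul
      (hasDerivAt_exp_smul_const LB z).differentiableAt
  have hF_bdd : BddAbove ((norm ∘ F) '' verticalClosedStrip 0 1) := by
    obtain ⟨CA, hCA⟩ := hLA.exists_norm_exp_smul_le
    obtain ⟨CB, hCB⟩ := hLB.exists_norm_exp_smul_le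
    refine ⟨CA * ‖T‖ * CB, Set.forall_mem_image.mpr fun z hz => ?_⟩
    have hA := hCA z hz
    have hB := hCB z hz
    have hCA_nonneg : 0 ≤ CA := (norm_nonneg _).trans hA
    exact norm_mul₃_le.trans (by gcongr)
  have hF_left : ∀ z ∈ re ⁻¹' {0}, ‖F z‖ ≤ ‖T‖ := fun z hz => by
    have hA := hLA.norm_exp_smul_le_one_of_re_eq_zero hz
    have hB := hLB.norm_exp_smul_le_one_of_re_eq_zero hz
    calc ‖F z‖ ≤ _ := norm_mul₃_le
      _ ≤ 1 * ‖T‖ * 1 := by gcongr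
      _ = ‖T‖ := by ring
  have hF_right : ∀ z ∈ re ⁻¹' {1}, ‖F z‖ ≤ ‖NormedSpace.exp LA * T * NormedSpace.exp LB‖ :=
      fun z hz => by
    have hz' : (z - 1).re = 0 := by simp_all
    have hA := hLA.norm_exp_smul_le_one_of_re_eq_zero hz'
    have hB := hLB.norm_exp_smul_le_one_of_re_eq_zero hz'
    have hF : F z = NormedSpace.exp ((z - 1) • LA) * (NormedSpace.exp LA * T * NormedSpace.exp LB)
        * NormedSpace.exp ((z - 1) • LB) := by
      have hzA := exp_add_smul LA (z - 1) 1
      have hzB := exp_add_smul LB 1 (z - 1)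
      simp only [sub_add_cancel, add_sub_cancel, one_smul] at hzA hzB
      simp only [F, hzA, hzB, mul_assoc]
    rw [hF]
    calc _ ≤ _ := norm_mul₃_le
      _ ≤ 1 * ‖NormedSpace.exp LA * T * NormedSpace.exp LB‖ * 1 := by gcongr
      _ = _ := by ring
  have hθ : (θ : ℂ) ∈ verticalClosedStrip 0 1 := by simp [verticalClosedStrip, hθ0, hθ1]
  simpa [F, Complex.coe_smul] using
    norm_le_interp_of_mem_verticalClosedStrip₀₁' F hθ hF_diff.diffContOnCl hF_bdd hF_left hF_right

end CStarAlgebra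

section RealCFC

variable {A : Type*} [NormedRing A] [StarRing A] [NormedAlgebra ℝ A]
  [ContinuousFunctionalCalculus ℝ A IsSelfAdjoint] [PartialOrder A] [StarOrderedRing A]
  [NonnegSpectrumClass ℝ A]

theorem CFC.rpow_eq_exp_smul_log (a : A) (θ : ℝ) (ha : IsStrictlyPositive a) :
    cfc (fun x : ℝ => x ^ θ) a = exp (θ • CFC.log a) := by
  have hlog : ContinuousOn Real.log (spectrum ℝ a) :=
    Real.continuousOn_log.mono fun x hx => (ha.spectrum_pos hx).ne'
  calc cfc (fun x : ℝ => x ^ θ) a = cfc (Real.exp ∘ fun x => θ * Real.log x) a :=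
        cfc_congr fun x hx => by
          simp [Real.rpow_def_of_pos (ha.spectrum_pos hx), mul_comm]
    _ = cfc Real.exp (cfc (fun x => θ * Real.log x) a) :=
        cfc_comp' _ _ a Real.continuous_exp.continuousOn (hlog.const_smul θ)
    _ = exp (cfc (fun x => θ * Real.log x) a) := CFC.real_exp_eq_normedSpace_exp
    _ = exp (θ • CFC.log a) := by rw [cfc_const_mul θ Real.log a]; rfl

end RealCFC

theorem ContinuousLinearMap.isStrictlyPositive_of_mul_norm_sq_le_re_inner {H : Type*}
    [NormedAddCommGroup H] [InnerProductSpace ℂ H] [CompleteSpace H] {A : H →L[ℂ] H}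
    (hA : IsSelfAdjoint A) {c : ℝ} (hc : 0 < c) (h : ∀ φ : H, c * ‖φ‖ ^ 2 ≤ (⟪φ, A φ⟫_ℂ).re) :
    IsStrictlyPositive A := by
  refine (isStrictlyPositive_algebraMap (A := H →L[ℂ] H) hc).of_le ?_
  rw [le_def, isPositive_def']
  refine ⟨hA.sub (.algebraMap _ (.all c)), fun φ => ?_⟩
  have hcφ : (⟪c • φ, φ⟫_ℂ).re = c * ‖φ‖ ^ 2 := by
    rw [← Complex.coe_smul, inner_smul_left, Complex.conj_ofReal, Complex.re_ofReal_mul,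
      ← RCLike.re_to_complex, inner_self_eq_norm_sq]
  have hAφ : ⟪A φ, φ⟫_ℂ = ⟪φ, A φ⟫_ℂ := hA.isSymmetric φ φ
  simpa only [reApplyInnerSelf_apply, sub_apply, algebraMap_apply, inner_sub_left, hAφ,
    RCLike.re_to_complex, sub_re, hcφ, sub_nonneg] using h φ

theorem stmt_9_general {H : Type*} [NormedAddCommGroup H] [InnerProductSpace ℂ H]
    [CompleteSpace H] (T A B : H →L[ℂ] H)
    (hA : IsSelfAdjoint A) (hB : IsSelfAdjoint B)
    (c : ℝ) (hc : 0 < c)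
    (hAc : ∀ φ : H, c * ‖φ‖ ^ 2 ≤ (⟪φ, A φ⟫_ℂ).re)
    (hBc : ∀ φ : H, c * ‖φ‖ ^ 2 ≤ (⟪φ, B φ⟫_ℂ).re)
    (M₀ M₁ : ℝ)
    (hT : ‖T‖ ≤ M₀) (hATB : ‖A * T * B‖ ≤ M₁)
    (θ : ℝ) (hθ0 : 0 ≤ θ) (hθ1 : θ ≤ 1) :
    ‖cfc (fun x : ℝ => x ^ θ) A * T * cfc (fun x : ℝ => x ^ θ) B‖
      ≤ M₀ ^ (1 - θ) * M₁ ^ θ := by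
  have hA_pos := ContinuousLinearMap.isStrictlyPositive_of_mul_norm_sq_le_re_inner hA hc hAc
  have hB_pos := ContinuousLinearMap.isStrictlyPositive_of_mul_norm_sq_le_re_inner hB hc hBc
  have h1θ : 0 ≤ 1 - θ := sub_nonneg.mpr hθ1
  have hM₀ : 0 ≤ M₀ := (norm_nonneg T).trans hT
  rw [CFC.rpow_eq_exp_smul_log A θ hA_pos, CFC.rpow_eq_exp_smul_log B θ hB_pos]
  calc _ ≤ ‖T‖ ^ (1 - θ) * ‖exp (CFC.log A) * T * exp (CFC.log B)‖ ^ θ :=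
        IsSelfAdjoint.log.norm_exp_smul_mul_mul_exp_smul_le .log T hθ0 hθ1
    _ = ‖T‖ ^ (1 - θ) * ‖A * T * B‖ ^ θ := by rw [CFC.exp_log A, CFC.exp_log B]
    _ ≤ M₀ ^ (1 - θ) * M₁ ^ θ := by gcongr

/-- Operator interpolation: if `T` is bounded, `A, B` are self-adjoint, positive and
invertible (bounded below by `c • 1` with `c > 0`), `‖T‖ ≤ M₀` and `‖A T B‖ ≤ M₁`,
then for every `θ ∈ [0,1]`, `‖A^θ T B^θ‖ ≤ M₀^(1-θ) M₁^θ`, the real powers being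
defined by the continuous functional calculus. -/
theorem stmt_9 {H : Type*} [NormedAddCommGroup H] [InnerProductSpace ℂ H]
    [CompleteSpace H] (T A B : H →L[ℂ] H)
    (hA : IsSelfAdjoint A) (hB : IsSelfAdjoint B)
    (c : ℝ) (hc : 0 < c)
    (hAc : ∀ φ : H, c * ‖φ‖ ^ 2 ≤ (⟪φ, A φ⟫_ℂ).re)
    (hBc : ∀ φ : H, c * ‖φ‖ ^ 2 ≤ (⟪φ, B φ⟫_ℂ).re)
    (M₀ M₁ : ℝ) (hM₀ : 0 ≤ M₀) (hM₁ : 0 ≤ M₁)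
    (hT : ‖T‖ ≤ M₀) (hATB : ‖A * T * B‖ ≤ M₁)
    (θ : ℝ) (hθ0 : 0 ≤ θ) (hθ1 : θ ≤ 1) :
    ‖cfc (fun x : ℝ => x ^ θ) A * T * cfc (fun x : ℝ => x ^ θ) B‖
      ≤ M₀ ^ (1 - θ) * M₁ ^ θ :=
  stmt_9_general T A B hA hB c hc hAc hBc M₀ M₁ hT hATB θ hθ0 hθ1
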